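/- arXiv:1511.02304 — 2 statements merged into one kernel-verified Lean document; each statement's English description precedes it below -/
import Mathlib

section
/- There exists a constant C > 0 such that for every function f : ℝ → ℝ that is continuously differentiable on [0,1], the Gagliardo–Nirenberg inequality ‖f‖_{L⁴(0,1)} ≤ C·(‖f‖ + ‖f'‖)^{1/2}·‖f‖_{L¹(0,1)}^{1/2} holds, where ‖·‖ denotes the L² norm on (0,1) and ‖f‖_{L¹(0,1)} = ∫₀¹ |f(x)| dx (inequality (gnb) of the paper: ‖Ψ‖_{L⁴} ≲ ‖Ψ‖_{H¹}^{1/2}‖Ψ‖_{L¹}^{1/2}). -/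
open MeasureTheory Set

/-- L² norm on (0,1). -/
noncomputable def L2norm (f : ℝ → ℝ) : ℝ := Real.sqrt (∫ x in (0:ℝ)..1, f x ^ 2)

/-- L⁴ norm on (0,1). -/
noncomputable def L4norm (f : ℝ → ℝ) : ℝ := (∫ x in (0:ℝ)..1, f x ^ 4) ^ ((1:ℝ)/4)

/-- L¹ norm on (0,1). -/
noncomputable def L1norm (f : ℝ → ℝ) : ℝ := ∫ x in (0:ℝ)..1, |f x|

/-! Let `M = max |f|` on `[0,1]`. Then `∫ f⁴ ≤ M³ ‖f‖_{L¹}` and `‖f‖² ≤ M ‖f‖_{L¹}`. The fundamental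
theorem of calculus for `f²` and Cauchy–Schwarz give `f(x)² ≤ f(y)² + 2 ‖f‖ ‖f'‖`, and averaging in
`y` gives `M² ≤ ‖f‖ (‖f‖ + 2 ‖f'‖)`. Hence `M⁴ ≤ 4 ‖f‖² (‖f‖ + ‖f'‖)² ≤ 4 M ‖f‖_{L¹} (‖f‖ + ‖f'‖)²`,
so `M³ ≤ 4 (‖f‖ + ‖f'‖)² ‖f‖_{L¹}` and `‖f‖_{L⁴}⁴ ≤ 4 (‖f‖ + ‖f'‖)² ‖f‖_{L¹}²`. -/

theorem integral_abs_mul_le_sqrt_mul_sqrt {α : Type*} [MeasurableSpace α] {μ : Measure α}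
    {f g : α → ℝ} (hf : MemLp f 2 μ) (hg : MemLp g 2 μ) :
    ∫ x, |f x * g x| ∂μ ≤ √(∫ x, f x ^ 2 ∂μ) * √(∫ x, g x ^ 2 ∂μ) := by
  have h := integral_mul_le_Lp_mul_Lq_of_nonneg Real.HolderConjugate.two_two
    (Filter.Eventually.of_forall fun x => abs_nonneg (f x))
    (Filter.Eventually.of_forall fun x => abs_nonneg (g x))
    (by rw [ENNReal.ofReal_ofNat]; exact hf.abs) (by rw [ENNReal.ofReal_ofNat]; exact hg.abs)
  simpa [abs_mul, Real.sqrt_eq_rpow] using h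

theorem ContinuousOn.memLp_two_restrict_Ioc {f : ℝ → ℝ} {a b : ℝ}
    (hf : ContinuousOn f (Icc a b)) :
    MemLp f 2 (volume.restrict (Ioc a b)) :=
  (memLp_two_iff_integrable_sq
    ((hf.mono Ioc_subset_Icc_self).aestronglyMeasurable measurableSet_Ioc)).2
    ((hf.pow 2).integrableOn_Icc.mono_set Ioc_subset_Icc_self)

theorem abs_sub_le_integral_abs_deriv {f f' : ℝ → ℝ} {a b x y : ℝ}
    (hf : ∀ t ∈ Icc a b, HasDerivWithinAt f (f' t) (Icc a b) t) (hf' : ContinuousOn f' (Icc a b))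
    (hx : x ∈ Icc a b) (hy : y ∈ Icc a b) : |f x - f y| ≤ ∫ t in a..b, |f' t| := by
  wlog hyx : y ≤ x generalizing x y
  · rw [abs_sub_comm]; exact this hy hx (le_of_not_ge hyx)
  have hsub : Icc y x ⊆ Icc a b := Icc_subset_Icc hy.1 hx.2
  have hftc : ∫ t in y..x, f' t = f x - f y :=
    intervalIntegral.integral_eq_sub_of_hasDeriv_right_of_le hyx
      (fun t ht => (hf t (hsub ht)).continuousWithinAt.mono hsub)
      (fun t ht => ((hf t (hsub (Ioo_subset_Icc_self ht))).hasDerivAt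
        (Icc_mem_nhds (hy.1.trans_lt ht.1) (ht.2.trans_le hx.2))).hasDerivWithinAt)
      ((hf'.mono hsub).intervalIntegrable_of_Icc hyx)
  rw [← hftc]
  calc |∫ t in y..x, f' t| ≤ ∫ t in y..x, |f' t| :=
        intervalIntegral.abs_integral_le_integral_abs hyx
    _ ≤ ∫ t in a..b, |f' t| :=
      intervalIntegral.integral_mono_interval hy.1 hyx hx.2
        (Filter.Eventually.of_forall fun _ => abs_nonneg _)
        (hf'.abs.intervalIntegrable_of_Icc (hy.1.trans (hyx.trans hx.2)))

theorem integral_abs_pow_le_pow_mul_integral_abs {f : ℝ → ℝ} {a b M : ℝ} (hab : a ≤ b)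
    (hf : ContinuousOn f (Icc a b)) (hM : ∀ x ∈ Icc a b, |f x| ≤ M) (n : ℕ) :
    ∫ x in a..b, |f x| ^ (n + 1) ≤ M ^ n * ∫ x in a..b, |f x| := by
  rw [← intervalIntegral.integral_const_mul]
  refine intervalIntegral.integral_mono_on hab ((hf.abs.pow _).intervalIntegrable_of_Icc hab)
    ((continuousOn_const.mul hf.abs).intervalIntegrable_of_Icc hab) fun x hx => ?_
  rw [pow_succ]
  exact mul_le_mul_of_nonneg_right (pow_le_pow_left₀ (abs_nonneg _) (hM x hx) n) (abs_nonneg _)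

theorem L2norm_nonneg (f : ℝ → ℝ) : 0 ≤ L2norm f := Real.sqrt_nonneg _

theorem L1norm_nonneg (f : ℝ → ℝ) : 0 ≤ L1norm f :=
  intervalIntegral.integral_nonneg zero_le_one fun _ _ => abs_nonneg _

theorem L4norm_nonneg (f : ℝ → ℝ) : 0 ≤ L4norm f :=
  Real.rpow_nonneg (intervalIntegral.integral_nonneg zero_le_one fun _ _ => by positivity) _

theorem L4norm_pow_four (f : ℝ → ℝ) : L4norm f ^ 4 = ∫ x in (0:ℝ)..1, f x ^ 4 := by
  have h : 0 ≤ ∫ x in (0:ℝ)..1, f x ^ 4 :=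
    intervalIntegral.integral_nonneg zero_le_one fun _ _ => by positivity
  rw [L4norm, ← Real.rpow_mul_natCast h]
  norm_num

theorem L2norm_sq_le_mul_L1norm {f : ℝ → ℝ} {M : ℝ} (hf : ContinuousOn f (Icc 0 1))
    (hM : ∀ x ∈ Icc (0:ℝ) 1, |f x| ≤ M) : L2norm f ^ 2 ≤ M * L1norm f := by
  have hA : 0 ≤ ∫ x in (0:ℝ)..1, f x ^ 2 :=
    intervalIntegral.integral_nonneg zero_le_one fun _ _ => sq_nonneg _
  simpa [L2norm, L1norm, Real.sq_sqrt hA, sq_abs] using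
    integral_abs_pow_le_pow_mul_integral_abs zero_le_one hf hM 1

theorem L4norm_pow_four_le_mul_L1norm {f : ℝ → ℝ} {M : ℝ} (hf : ContinuousOn f (Icc 0 1))
    (hM : ∀ x ∈ Icc (0:ℝ) 1, |f x| ≤ M) : L4norm f ^ 4 ≤ M ^ 3 * L1norm f := by
  rw [L4norm_pow_four]
  simpa [L1norm, (by decide : Even 4).pow_abs] using
    integral_abs_pow_le_pow_mul_integral_abs zero_le_one hf hM 3

theorem sq_le_L2norm_mul_of_hasDerivWithinAt {f f' : ℝ → ℝ} {x : ℝ}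
    (hf : ∀ t ∈ Icc (0:ℝ) 1, HasDerivWithinAt f (f' t) (Icc 0 1) t)
    (hf' : ContinuousOn f' (Icc 0 1)) (hx : x ∈ Icc (0:ℝ) 1) :
    f x ^ 2 ≤ L2norm f * (L2norm f + 2 * L2norm f') := by
  have hfc : ContinuousOn f (Icc 0 1) := fun t ht => (hf t ht).continuousWithinAt
  have hsq : ∀ t ∈ Icc (0:ℝ) 1,
      HasDerivWithinAt (fun t => f t ^ 2) (2 * f t * f' t) (Icc 0 1) t := fun t ht => by
    simpa using (hf t ht).fun_pow 2
  have hcross : ∫ t in (0:ℝ)..1, |2 * f t * f' t| ≤ 2 * (L2norm f * L2norm f') := by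
    simp only [mul_assoc, abs_mul (2:ℝ), abs_two]
    rw [intervalIntegral.integral_const_mul, L2norm, L2norm,
      intervalIntegral.integral_of_le zero_le_one, intervalIntegral.integral_of_le zero_le_one,
      intervalIntegral.integral_of_le zero_le_one]
    gcongr
    exact integral_abs_mul_le_sqrt_mul_sqrt hfc.memLp_two_restrict_Ioc hf'.memLp_two_restrict_Ioc
  have hpt : ∀ y ∈ Icc (0:ℝ) 1, f x ^ 2 ≤ f y ^ 2 + 2 * (L2norm f * L2norm f') := fun y hy => by
    have := abs_sub_le_integral_abs_deriv hsq ((continuousOn_const.mul hfc).mul hf') hx hy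
    linarith [le_abs_self (f x ^ 2 - f y ^ 2)]
  have hf2 : IntervalIntegrable (fun t => f t ^ 2) volume 0 1 :=
    (hfc.pow 2).intervalIntegrable_of_Icc zero_le_one
  have hint : ∫ _ in (0:ℝ)..1, f x ^ 2 ≤
      ∫ y in (0:ℝ)..1, (f y ^ 2 + 2 * (L2norm f * L2norm f')) :=
    intervalIntegral.integral_mono_on zero_le_one intervalIntegrable_const
      (hf2.add intervalIntegrable_const) hpt
  rw [intervalIntegral.integral_add hf2 intervalIntegrable_const] at hint
  have hA : L2norm f * L2norm f = ∫ t in (0:ℝ)..1, f t ^ 2 :=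
    Real.mul_self_sqrt (intervalIntegral.integral_nonneg zero_le_one fun t _ => sq_nonneg (f t))
  simp only [intervalIntegral.integral_const, sub_zero, one_smul] at hint
  linarith

theorem cube_le_of_sq_le_mul_add {M a q B : ℝ} (hM : 0 ≤ M) (ha : 0 ≤ a) (hq : 0 ≤ q)
    (hB : 0 ≤ B) (hMa : M ^ 2 ≤ a * (a + 2 * q)) (haM : a ^ 2 ≤ M * B) :
    M ^ 3 ≤ 4 * (a + q) ^ 2 * B := by
  rcases hM.eq_or_lt with rfl | hMpos
  · rw [zero_pow three_ne_zero]; positivity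
  have h4 : M * M ^ 3 ≤ M * (4 * (a + q) ^ 2 * B) :=
    calc M * M ^ 3 = (M ^ 2) ^ 2 := by ring
      _ ≤ (a * (a + 2 * q)) ^ 2 := pow_le_pow_left₀ (sq_nonneg M) hMa 2
      _ ≤ a ^ 2 * (2 * (a + q)) ^ 2 := by rw [mul_pow]; gcongr; linarith
      _ ≤ M * B * (2 * (a + q)) ^ 2 := by gcongr
      _ = M * (4 * (a + q) ^ 2 * B) := by ring
  exact le_of_mul_le_mul_left h4 hMpos

theorem le_sqrt_two_mul_sqrt_mul_sqrt {L H B : ℝ} (hL : 0 ≤ L) (hH : 0 ≤ H) (hB : 0 ≤ B)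
    (h : L ^ 4 ≤ 4 * H ^ 2 * B ^ 2) : L ≤ √2 * √H * √B := by
  rw [← pow_le_pow_iff_left₀ hL (by positivity) four_ne_zero]
  calc L ^ 4 ≤ 4 * H ^ 2 * B ^ 2 := h
    _ = (√2 * √H * √B) ^ 4 := by
      simp only [mul_pow, show (4:ℕ) = 2 * 2 from rfl, pow_mul, Real.sq_sqrt zero_le_two,
        Real.sq_sqrt hH, Real.sq_sqrt hB]
      ring

/-- Gagliardo–Nirenberg inequality (gnb): `‖Ψ‖_{L⁴} ≲ ‖Ψ‖_{H¹}^{1/2} ‖Ψ‖_{L¹}^{1/2}` on (0,1). -/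
theorem gagliardo_nirenberg_L4_b :
    ∃ C > (0:ℝ), ∀ f f' : ℝ → ℝ,
      (∀ x ∈ Set.Icc (0:ℝ) 1, HasDerivWithinAt f (f' x) (Set.Icc (0:ℝ) 1) x) →
      ContinuousOn f' (Set.Icc (0:ℝ) 1) →
      L4norm f ≤ C * (L2norm f + L2norm f') ^ ((1:ℝ)/2) * L1norm f ^ ((1:ℝ)/2) := by
  refine ⟨√2, by positivity, fun f f' hf hf' => ?_⟩
  have hfc : ContinuousOn f (Icc 0 1) := fun x hx => (hf x hx).continuousWithinAt
  obtain ⟨x₀, hx₀, hmax⟩ := isCompact_Icc.exists_isMaxOn (nonempty_Icc.2 zero_le_one) hfc.abs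
  set M := |f x₀|
  have hbound : ∀ x ∈ Icc (0:ℝ) 1, |f x| ≤ M := hmax
  have hcube : M ^ 3 ≤ 4 * (L2norm f + L2norm f') ^ 2 * L1norm f :=
    cube_le_of_sq_le_mul_add (abs_nonneg _) (L2norm_nonneg f) (L2norm_nonneg f') (L1norm_nonneg f)
      ((sq_abs _).trans_le (sq_le_L2norm_mul_of_hasDerivWithinAt hf hf' hx₀))
      (L2norm_sq_le_mul_L1norm hfc hbound)
  simp only [← Real.sqrt_eq_rpow]
  refine le_sqrt_two_mul_sqrt_mul_sqrt (L4norm_nonneg f)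
    (add_nonneg (L2norm_nonneg f) (L2norm_nonneg f')) (L1norm_nonneg f) ?_
  calc L4norm f ^ 4 ≤ M ^ 3 * L1norm f := L4norm_pow_four_le_mul_L1norm hfc hbound
    _ ≤ 4 * (L2norm f + L2norm f') ^ 2 * L1norm f * L1norm f := by gcongr; exact L1norm_nonneg f
    _ = 4 * (L2norm f + L2norm f') ^ 2 * L1norm f ^ 2 := by ring
end

section
/- Let Δ > 0, K₁ > 0, x₀ ∈ ℝ, and define a : ℝ → ℝ by a(x) = (2/Δ) · ln(cosh(Δ √(K₁/2) (x + x₀))). Then a is twice differentiable and satisfies a''(x) = Δ K₁ e^{−Δ a(x)} for every x ∈ ℝ, and the first integral (1/2)(a'(x))² + K₁ e^{−Δ a(x)} = K₁ holds for every x ∈ ℝ. -/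
/-!
With `u = Δ √(K₁/2) (x + x₀)` one has `a' = 2√(K₁/2) tanh u` and `e^{-Δa} = 1 / cosh² u`.
Since `tanh' = 1 / cosh²` and `tanh² + 1 / cosh² = 1`, both the equation `a'' = ΔK₁e^{-Δa}` and
the first integral follow from `2Δ(√(K₁/2))² = ΔK₁`.
-/

open Real

namespace Real

theorem hasDerivAt_log_cosh (x : ℝ) : HasDerivAt (fun t => log (cosh t)) (tanh x) x := by
  rw [tanh_eq_sinh_div_cosh]
  exact (hasDerivAt_cosh x).log (cosh_pos x).ne'

theorem hasDerivAt_tanh (x : ℝ) : HasDerivAt tanh (1 / cosh x ^ 2) x := by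
  have hquot := (hasDerivAt_sinh x).div (hasDerivAt_cosh x) (cosh_pos x).ne'
  rw [show tanh = sinh / cosh from funext tanh_eq_sinh_div_cosh]
  refine hquot.congr_deriv ?_
  rw [← cosh_sq_sub_sinh_sq x]
  ring

theorem tanh_sq_add_one_div_cosh_sq (x : ℝ) : tanh x ^ 2 + 1 / cosh x ^ 2 = 1 := by
  have hcosh : cosh x ≠ 0 := (cosh_pos x).ne'
  rw [tanh_eq_sinh_div_cosh]
  field_simp
  linarith [cosh_sq_sub_sinh_sq x]

theorem exp_neg_two_mul_log_cosh (x : ℝ) : exp (-(2 * log (cosh x))) = 1 / cosh x ^ 2 := by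
  rw [exp_neg, two_mul, exp_add, exp_log (cosh_pos x), one_div, sq]

end Real

theorem hasDerivAt_mul_add_const (c d x : ℝ) : HasDerivAt (fun x => c * (x + d)) c x := by
  simpa using ((hasDerivAt_id x).add_const d).const_mul c

section Profile

variable {Δ s x₀ : ℝ}

theorem hasDerivAt_two_div_mul_log_cosh (hΔ : Δ ≠ 0) (x : ℝ) :
    HasDerivAt (fun x => 2 / Δ * log (cosh (Δ * s * (x + x₀))))
      (2 * s * tanh (Δ * s * (x + x₀))) x := by
  have hinner := hasDerivAt_mul_add_const (Δ * s) x₀ x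
  refine (((hasDerivAt_log_cosh _).comp x hinner).const_mul (2 / Δ)).congr_deriv ?_
  field_simp

theorem hasDerivAt_mul_tanh (x : ℝ) :
    HasDerivAt (fun x => 2 * s * tanh (Δ * s * (x + x₀)))
      (2 * Δ * s ^ 2 / cosh (Δ * s * (x + x₀)) ^ 2) x := by
  have hinner := hasDerivAt_mul_add_const (Δ * s) x₀ x
  refine (((hasDerivAt_tanh _).comp x hinner).const_mul (2 * s)).congr_deriv ?_
  ring

theorem exp_neg_mul_two_div_mul_log_cosh (hΔ : Δ ≠ 0) (u : ℝ) :
    exp (-Δ * (2 / Δ * log (cosh u))) = 1 / cosh u ^ 2 := by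
  rw [← exp_neg_two_mul_log_cosh]
  congr 1
  field_simp

end Profile

/-- The steady-state profile `a(x) = (2/Δ)ln(cosh(Δ√(K₁/2)(x+x₀)))` is twice differentiable,
satisfies `a'' = ΔK₁e^{−Δa}` and the first integral `(1/2)(a')² + K₁e^{−Δa} = K₁`. -/
theorem steady_profile_a (Δ K₁ x₀ : ℝ) (hΔ : 0 < Δ) (hK₁ : 0 < K₁)
    (a : ℝ → ℝ)
    (ha : a = fun x => (2 / Δ) * Real.log (Real.cosh (Δ * Real.sqrt (K₁ / 2) * (x + x₀)))) :
    (∀ x, DifferentiableAt ℝ a x) ∧ (∀ x, DifferentiableAt ℝ (deriv a) x) ∧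
    (∀ x, deriv (deriv a) x = Δ * K₁ * Real.exp (-Δ * a x)) ∧
    (∀ x, (1 / 2) * (deriv a x) ^ 2 + K₁ * Real.exp (-Δ * a x) = K₁) := by
  subst ha
  set s := √(K₁ / 2)
  have hs : s ^ 2 = K₁ / 2 := sq_sqrt (by positivity)
  have hda := hasDerivAt_two_div_mul_log_cosh (s := s) (x₀ := x₀) hΔ.ne'
  have hderiv : deriv (fun x => 2 / Δ * log (cosh (Δ * s * (x + x₀)))) =
      fun x => 2 * s * tanh (Δ * s * (x + x₀)) := funext fun x => (hda x).deriv
  have hdda := hasDerivAt_mul_tanh (Δ := Δ) (s := s) (x₀ := x₀)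
  refine ⟨fun x => (hda x).differentiableAt, fun x => hderiv ▸ (hdda x).differentiableAt,
    fun x => ?_, fun x => ?_⟩
  · rw [hderiv, (hdda x).deriv, exp_neg_mul_two_div_mul_log_cosh hΔ.ne', hs]
    ring
  · rw [hderiv, exp_neg_mul_two_div_mul_log_cosh hΔ.ne']
    linear_combination (2 * tanh (Δ * s * (x + x₀)) ^ 2) * hs +
      K₁ * tanh_sq_add_one_div_cosh_sq (Δ * s * (x + x₀))
end
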